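/- Under the change of variables v_k = μ_k + ε_k with ε_k ~ N(0,Σ) i.i.d., the importance weight satisfies p_*(V)/p_M(V) = (1/η)·exp(−(1/λ)·S(M,E)) where S(M,E) = J(M+E) + (λ/2)·Σ_{k=0}^{N−1} μ_k^T Σ^{-1}(μ_k + 2ε_k), and consequently the normalizer satisfies η = E_{P_M}[exp(−S(M,E)/λ)]. -/

import Mathlib

/-!
Since Σ⁻¹ is symmetric, (μ + ε)ᵀΣ⁻¹(μ + ε) = εᵀΣ⁻¹ε + μᵀΣ⁻¹(μ + 2ε). Hence at V = M + E the
zero-mean density is the mean-M density times exp(-½ Σ_k μ_kᵀΣ⁻¹(μ_k + 2ε_k)), and this factor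
merges with exp(-J/λ) into exp(-S(M, E)/λ). The resulting pointwise identity
p_M(V) e^{-S(M, V - M)/λ} = p₀(V) e^{-J(V)/λ} integrates to the formula for η.
-/

open Real MeasureTheory Matrix Finset

/-- Density of the product Gaussian with block means `M k` and common positive
definite covariance `S`. -/
noncomputable def gaussDensity {m N : ℕ} (S : Matrix (Fin m) (Fin m) ℝ)
    (M : Fin N → Fin m → ℝ) (V : Fin N → Fin m → ℝ) : ℝ :=
  ((2 * Real.pi) ^ m * S.det) ^ (-(N : ℝ) / 2) *
    Real.exp (-(1 / 2) * ∑ k, (V k - M k) ⬝ᵥ (S⁻¹ *ᵥ (V k - M k)))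

/-- The MPPI cost `S(M, E) = J(M+E) + (λ/2) Σ_k μ_k^T Σ⁻¹ (μ_k + 2 ε_k)`. -/
noncomputable def mppiCost {m N : ℕ} (S : Matrix (Fin m) (Fin m) ℝ)
    (J : (Fin N → Fin m → ℝ) → ℝ) (lam : ℝ)
    (M E : Fin N → Fin m → ℝ) : ℝ :=
  J (M + E) + (lam / 2) * ∑ k, M k ⬝ᵥ (S⁻¹ *ᵥ (M k + 2 • E k))

theorem Matrix.IsSymm.add_dotProduct_mulVec_add {n R : Type*} [Fintype n] [CommRing R]
    {A : Matrix n n R} (hA : A.IsSymm) (x y : n → R) :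
    (x + y) ⬝ᵥ (A *ᵥ (x + y)) = y ⬝ᵥ (A *ᵥ y) + x ⬝ᵥ (A *ᵥ (x + 2 • y)) := by
  have hcross : y ⬝ᵥ (A *ᵥ x) = x ⬝ᵥ (A *ᵥ y) := by
    rw [dotProduct_mulVec, ← mulVec_transpose, hA.eq, dotProduct_comm]
  simp only [mulVec_add, add_dotProduct, dotProduct_add, two_smul, hcross]
  ring

theorem gaussDensity_pos {m N : ℕ} {S : Matrix (Fin m) (Fin m) ℝ} (hdet : 0 < S.det)
    (M V : Fin N → Fin m → ℝ) : 0 < gaussDensity S M V := by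
  unfold gaussDensity
  positivity

theorem measurable_gaussDensity {m N : ℕ} (S : Matrix (Fin m) (Fin m) ℝ)
    (M : Fin N → Fin m → ℝ) : Measurable (gaussDensity S M) := by
  unfold gaussDensity
  simp only [dotProduct, mulVec]
  fun_prop

theorem gaussDensity_zero_add {m N : ℕ} {S : Matrix (Fin m) (Fin m) ℝ} (hS : S.IsSymm)
    (M E : Fin N → Fin m → ℝ) :
    gaussDensity S 0 (M + E) = gaussDensity S M (M + E) *
      Real.exp (-(1 / 2) * ∑ k, M k ⬝ᵥ (S⁻¹ *ᵥ (M k + 2 • E k))) := by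
  simp only [gaussDensity, Pi.add_apply, Pi.zero_apply, sub_zero, add_sub_cancel_left,
    hS.inv.add_dotProduct_mulVec_add, Finset.sum_add_distrib, mul_add, Real.exp_add, mul_assoc]

theorem exp_neg_mppiCost_div {m N : ℕ} (S : Matrix (Fin m) (Fin m) ℝ)
    (J : (Fin N → Fin m → ℝ) → ℝ) {lam : ℝ} (hlam : lam ≠ 0) (M E : Fin N → Fin m → ℝ) :
    Real.exp (-mppiCost S J lam M E / lam) = Real.exp (-J (M + E) / lam) *
      Real.exp (-(1 / 2) * ∑ k, M k ⬝ᵥ (S⁻¹ *ᵥ (M k + 2 • E k))) := by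
  rw [← Real.exp_add, mppiCost]
  congr 1
  field_simp
  ring

theorem integral_withDensity_ofReal {X : Type*} [MeasurableSpace X] {μ : Measure X}
    {f : X → ℝ} (hf : Measurable f) (hf0 : ∀ x, 0 ≤ f x) (g : X → ℝ) :
    ∫ x, g x ∂μ.withDensity (fun x => ENNReal.ofReal (f x)) = ∫ x, f x * g x ∂μ := by
  rw [integral_withDensity_eq_integral_toReal_smul hf.ennreal_ofReal
    (Filter.Eventually.of_forall fun _ => ENNReal.ofReal_lt_top)]
  simp only [ENNReal.toReal_ofReal (hf0 _), smul_eq_mul]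

theorem gaussDensity_mul_exp_neg_mppiCost {m N : ℕ} {S : Matrix (Fin m) (Fin m) ℝ}
    (hS : S.IsSymm) (J : (Fin N → Fin m → ℝ) → ℝ) {lam : ℝ} (hlam : lam ≠ 0)
    (M V : Fin N → Fin m → ℝ) :
    gaussDensity S M V * Real.exp (-mppiCost S J lam M (V - M) / lam) =
      gaussDensity S 0 V * Real.exp (-J V / lam) := by
  obtain ⟨E, rfl⟩ : ∃ E, V = M + E := ⟨V - M, by abel⟩
  rw [add_sub_cancel_left, exp_neg_mppiCost_div S J hlam, gaussDensity_zero_add hS]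
  ring

theorem importance_weight_change_of_variables_general {m N : ℕ}
    (S : Matrix (Fin m) (Fin m) ℝ) (hS : S.PosDef)
    (J : (Fin N → Fin m → ℝ) → ℝ)
    (lam : ℝ) (hlam : 0 < lam)
    (M : Fin N → Fin m → ℝ)
    (P₀ PM : Measure (Fin N → Fin m → ℝ))
    (hP₀ : P₀ = volume.withDensity (fun V => ENNReal.ofReal (gaussDensity S 0 V)))
    (hPM : PM = volume.withDensity (fun V => ENNReal.ofReal (gaussDensity S M V)))
    (η : ℝ) (hη : η = ∫ V, Real.exp (-J V / lam) ∂P₀) :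
    (∀ E : Fin N → Fin m → ℝ,
      (Real.exp (-J (M + E) / lam) * gaussDensity S 0 (M + E) / η) /
          gaussDensity S M (M + E) =
        (1 / η) * Real.exp (-(mppiCost S J lam M E) / lam)) ∧
      η = ∫ V, Real.exp (-(mppiCost S J lam M (V - M)) / lam) ∂PM := by
  have hSymm : S.IsSymm := hS.isHermitian
  refine ⟨fun E => ?_, ?_⟩
  · have hpos := gaussDensity_pos hS.det_pos M (M + E)
    rw [gaussDensity_zero_add hSymm, exp_neg_mppiCost_div S J hlam.ne']
    field_simp
  · have hnonneg (M' : Fin N → Fin m → ℝ) V := (gaussDensity_pos hS.det_pos M' V).le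
    rw [hη, hP₀, hPM, integral_withDensity_ofReal (measurable_gaussDensity S 0) (hnonneg 0),
      integral_withDensity_ofReal (measurable_gaussDensity S M) (hnonneg M)]
    simp only [gaussDensity_mul_exp_neg_mppiCost hSymm J hlam.ne']

theorem importance_weight_change_of_variables {m N : ℕ}
    (S : Matrix (Fin m) (Fin m) ℝ) (hS : S.PosDef)
    (J : (Fin N → Fin m → ℝ) → ℝ) (hJ : Measurable J)
    (lam : ℝ) (hlam : 0 < lam)
    (M : Fin N → Fin m → ℝ)
    (P₀ PM : Measure (Fin N → Fin m → ℝ))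
    (hP₀ : P₀ = volume.withDensity (fun V => ENNReal.ofReal (gaussDensity S 0 V)))
    (hPM : PM = volume.withDensity (fun V => ENNReal.ofReal (gaussDensity S M V)))
    (η : ℝ) (hη : η = ∫ V, Real.exp (-J V / lam) ∂P₀) (hη0 : 0 < η)
    (hηfin : Integrable (fun V => Real.exp (-J V / lam)) P₀) :
    (∀ E : Fin N → Fin m → ℝ,
      (Real.exp (-J (M + E) / lam) * gaussDensity S 0 (M + E) / η) /
          gaussDensity S M (M + E) =
        (1 / η) * Real.exp (-(mppiCost S J lam M E) / lam)) ∧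
      η = ∫ V, Real.exp (-(mppiCost S J lam M (V - M)) / lam) ∂PM :=
  importance_weight_change_of_variables_general S hS J lam hlam M P₀ PM hP₀ hPM η hη
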